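/- arXiv:1505.07412 — 2 statements merged into one kernel-verified Lean document; each statement's English description precedes it below -/
import Mathlib

section
/- Let H be a real Hilbert space, T : H → H a bounded self-adjoint operator, and x, y ∈ H. Let μ_x and μ_y be spectral measures of T at x and at y respectively. If μ_x and μ_y are mutually singular, then ⟪x, y⟫ = 0. -/
/-!
Mutual singularity yields polynomials `p` that are small in `L²(μx)` while `1 - p` is small in
`L²(μy)`: Urysohn's lemma separates a compact set carrying most of `μy` from the complement of an
open set of small `μx`-measure, and Weierstrass approximation on a compact set carrying both
measures replaces the Urysohn function by a polynomial. For self-adjoint `T` the moment identities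
give `‖p(T) z‖² = ∫ p² dμ_z`, so both terms of
`⟪x, y⟫ = ⟪p(T) x, y⟫ + ⟪x, (1 - p)(T) y⟫` can be made arbitrarily small.
-/

open MeasureTheory RealInnerProductSpace

open Polynomial Set Function

theorem IsSelfAdjoint.aeval {R A : Type*} [CommSemiring R] [StarRing R] [TrivialStar R]
    [Semiring A] [StarRing A] [Algebra R A] [StarModule R A] {a : A} (ha : IsSelfAdjoint a)
    (p : R[X]) : IsSelfAdjoint (aeval a p) := by
  induction p using Polynomial.induction_on' with
  | add p q hp hq => rw [map_add]; exact hp.add hq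
  | monomial n c =>
    rw [aeval_monomial, ← Algebra.smul_def]
    exact (IsSelfAdjoint.all c).smul (ha.pow n)

theorem Continuous.integrable_of_ae_mem_isCompact {X : Type*} [TopologicalSpace X] [T2Space X]
    [MeasurableSpace X] [OpensMeasurableSpace X] {μ : Measure X} [IsFiniteMeasureOnCompacts μ]
    {K : Set X} (hK : IsCompact K) (hμK : ∀ᵐ t ∂μ, t ∈ K) {f : X → ℝ} (hf : Continuous f) :
    Integrable f μ := by
  rw [← Measure.restrict_eq_self_of_ae_mem hμK]
  exact hf.continuousOn.integrableOn_compact hK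

theorem MeasureTheory.Measure.MutuallySingular.exists_continuous_zero_one {X : Type*}
    [TopologicalSpace X] [T2Space X] [RegularSpace X] [LocallyCompactSpace X] [MeasurableSpace X]
    [BorelSpace X] {μ ν : Measure X} [μ.OuterRegular] [IsFiniteMeasure ν]
    [ν.InnerRegularCompactLTTop] (h : μ ⟂ₘ ν) {ε : ENNReal} (hε : ε ≠ 0) :
    ∃ f : C(X, ℝ), (∀ t, f t ∈ Icc 0 1) ∧ μ (support f) < ε ∧
      ν (support fun t => 1 - f t) < ε := by
  obtain ⟨s, hs, hμs, hνs⟩ := h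
  obtain ⟨K, hKs, hK, hνK⟩ := hs.exists_isCompact_lt_add (measure_ne_top ν s) hε
  obtain ⟨U, hKU, hU, hμU⟩ := K.exists_isOpen_lt_of_lt ε
    (by rw [measure_mono_null hKs hμs]; exact pos_iff_ne_zero.mpr hε)
  obtain ⟨f, hfU, hfK, hf01⟩ := exists_continuous_zero_one_of_isCompact' hK hU.isClosed_compl
    (disjoint_compl_right_iff_subset.mpr hKU)
  refine ⟨f, hf01, (measure_mono fun t ht => ?_).trans_lt hμU, ?_⟩
  · by_contra htU
    exact ht (hfU htU)
  · calc ν (support fun t => 1 - f t) ≤ ν (s \ K ∪ sᶜ) := measure_mono fun t ht => by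
          by_cases hts : t ∈ s
          · refine Or.inl ⟨hts, fun htK => ht ?_⟩
            simp [hfK htK]
          · exact Or.inr hts
      _ ≤ ν (s \ K) + ν sᶜ := measure_union_le _ _
      _ < ε := by
          rw [hνs, add_zero]
          exact measure_sdiff_lt_of_lt_add hK.measurableSet.nullMeasurableSet hKs
            (measure_ne_top ν K) hνK

theorem integral_sq_le_of_abs_sub_le {X : Type*} [MeasurableSpace X] {μ : Measure X}
    [IsFiniteMeasure μ] {q f : X → ℝ} (hf : Measurable f) (hf01 : ∀ t, f t ∈ Icc 0 1)
    {δ : ℝ} (hδ : δ ≤ 1) (hqf : ∀ᵐ t ∂μ, |q t - f t| ≤ δ) :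
    ∫ t, q t ^ 2 ∂μ ≤ 4 * μ.real (support f) + δ ^ 2 * μ.real univ := by
  have hsupp : MeasurableSet (support f) := (hf (measurableSet_singleton 0)).compl
  have hbound : ∀ᵐ t ∂μ, q t ^ 2 ≤ (support f).indicator (fun _ => 4) t + δ ^ 2 := by
    filter_upwards [hqf] with t ht
    obtain ⟨hlo, hhi⟩ := abs_le.mp ht
    by_cases hft : f t = 0
    · rw [indicator_of_notMem (notMem_support.mpr hft)]
      rw [hft] at hlo hhi
      nlinarith
    · rw [indicator_of_mem hft]
      have hq2 : 0 ≤ (2 - q t) * (2 + q t) := by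
        obtain ⟨hf0, hf1⟩ := hf01 t
        exact mul_nonneg (by linarith) (by linarith)
      nlinarith [sq_nonneg δ]
  calc ∫ t, q t ^ 2 ∂μ ≤ ∫ t, (support f).indicator (fun _ => 4) t + δ ^ 2 ∂μ :=
        integral_mono_of_nonneg (ae_of_all _ fun t => sq_nonneg _)
          (((integrable_const 4).indicator hsupp).add (integrable_const _)) hbound
    _ = 4 * μ.real (support f) + δ ^ 2 * μ.real univ := by
        rw [integral_add ((integrable_const 4).indicator hsupp) (integrable_const _),
          integral_indicator_const _ hsupp, integral_const, smul_eq_mul, smul_eq_mul,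
          mul_comm, mul_comm (μ.real univ)]

theorem MeasureTheory.Measure.MutuallySingular.exists_polynomial_integral_sq_le
    {μ ν : Measure ℝ} [IsFiniteMeasure μ] [IsFiniteMeasure ν] (h : μ ⟂ₘ ν) {K : Set ℝ}
    (hK : IsCompact K) (hμK : ∀ᵐ t ∂μ, t ∈ K) (hνK : ∀ᵐ t ∂ν, t ∈ K) {ε : ℝ} (hε : 0 < ε) :
    ∃ p : ℝ[X], ∫ t, p.eval t ^ 2 ∂μ ≤ ε ∧ ∫ t, (1 - p).eval t ^ 2 ∂ν ≤ ε := by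
  set M := μ.real univ + ν.real univ
  have hM : 0 ≤ M := by positivity
  set δ := min 1 (ε / (4 + M))
  have hδ : 0 < δ := lt_min one_pos (by positivity)
  have hδ1 : δ ≤ 1 := min_le_left _ _
  have hδε : (4 + M) * δ ≤ ε := (le_div_iff₀' (by positivity)).mp (min_le_right _ _)
  obtain ⟨f, hf01, hμf, hνf⟩ :=
    h.exists_continuous_zero_one (ENNReal.ofReal_pos.mpr hδ).ne'
  obtain ⟨p, hp⟩ := exists_polynomial_near_of_continuousOn _ _ f f.continuous.continuousOn δ hδ
  have hpf : ∀ t ∈ K, |p.eval t - f t| ≤ δ := fun t ht =>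
    (hp t (hK.isBounded.subset_Icc_sInf_sSup ht)).le
  have hμ := integral_sq_le_of_abs_sub_le (μ := μ) f.continuous.measurable hf01 hδ1
    (hμK.mono hpf)
  have hν := integral_sq_le_of_abs_sub_le (μ := ν) (q := fun t => (1 - p).eval t)
    (f := fun t => 1 - f t)
    (continuous_const.sub f.continuous).measurable
    (fun t => ⟨sub_nonneg.mpr (hf01 t).2, sub_le_self _ (hf01 t).1⟩) hδ1
    (hνK.mono fun t ht => by
      rw [eval_sub, eval_one, sub_sub_sub_cancel_left, abs_sub_comm]; exact hpf t ht)
  have hμf' : μ.real (support f) ≤ δ := ENNReal.toReal_le_of_le_ofReal hδ.le hμf.le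
  have hνf' : ν.real (support fun t => 1 - f t) ≤ δ :=
    ENNReal.toReal_le_of_le_ofReal hδ.le hνf.le
  have hδ2 : δ ^ 2 ≤ δ := by nlinarith
  refine ⟨p, hμ.trans ?_, hν.trans ?_⟩ <;> nlinarith [measureReal_nonneg (μ := μ) (s := univ),
    measureReal_nonneg (μ := ν) (s := univ)]

section Hilbert

variable {H : Type*} [NormedAddCommGroup H] [InnerProductSpace ℝ H]

theorem inner_aeval_apply_self_eq_integral (T : H →L[ℝ] H) {z : H} {μ : Measure ℝ}
    [IsFiniteMeasure μ] {K : Set ℝ} (hK : IsCompact K) (hμK : ∀ᵐ t ∂μ, t ∈ K)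
    (hz : ∀ k : ℕ, ⟪(T ^ k) z, z⟫ = ∫ t, t ^ k ∂μ) (p : ℝ[X]) :
    ⟪aeval T p z, z⟫ = ∫ t, p.eval t ∂μ := by
  induction p using Polynomial.induction_on' with
  | add p q hp hq =>
    rw [map_add, add_apply, inner_add_left, hp, hq, ← integral_add
      (p.continuous.integrable_of_ae_mem_isCompact hK hμK)
      (q.continuous.integrable_of_ae_mem_isCompact hK hμK)]
    simp only [eval_add]
  | monomial n c =>
    rw [aeval_monomial, ← Algebra.smul_def, smul_apply, real_inner_smul_left, hz n,
      ← integral_const_mul]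
    simp only [eval_monomial]

theorem norm_aeval_apply_sq [CompleteSpace H] {T : H →L[ℝ] H} (hT : IsSelfAdjoint T) {z : H}
    {μ : Measure ℝ} [IsFiniteMeasure μ] {K : Set ℝ} (hK : IsCompact K) (hμK : ∀ᵐ t ∂μ, t ∈ K)
    (hz : ∀ k : ℕ, ⟪(T ^ k) z, z⟫ = ∫ t, t ^ k ∂μ) (p : ℝ[X]) :
    ‖aeval T p z‖ ^ 2 = ∫ t, p.eval t ^ 2 ∂μ := by
  have hsymm : ⟪aeval T p (aeval T p z), z⟫ = ⟪aeval T p z, aeval T p z⟫ :=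
    (hT.aeval p).isSymmetric _ _
  rw [← real_inner_self_eq_norm_sq, ← hsymm, ← mul_apply_eq_comp, ← map_mul,
    inner_aeval_apply_self_eq_integral T hK hμK hz]
  simp only [eval_mul, sq]

theorem inner_eq_zero_of_forall_exists_polynomial [CompleteSpace H] {T : H →L[ℝ] H}
    (hT : IsSelfAdjoint T) {x y : H}
    (h : ∀ ε > 0, ∃ p : ℝ[X], ‖aeval T p x‖ ≤ ε ∧ ‖aeval T (1 - p) y‖ ≤ ε) : ⟪x, y⟫ = 0 := by
  have hsplit (p : ℝ[X]) : ⟪x, y⟫ = ⟪aeval T p x, y⟫ + ⟪x, aeval T (1 - p) y⟫ := by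
    have hsymm : ⟪x, aeval T (1 - p) y⟫ = ⟪aeval T (1 - p) x, y⟫ :=
      ((hT.aeval (1 - p)).isSymmetric _ _).symm
    rw [hsymm, map_sub, map_one, sub_apply, one_apply_eq_self, inner_sub_left]
    ring
  refine abs_nonpos_iff.mp (le_of_forall_pos_le_add fun ε hε => ?_)
  obtain ⟨p, hpx, hpy⟩ := h (ε / (‖x‖ + ‖y‖ + 1)) (by positivity)
  calc |⟪x, y⟫| ≤ ‖aeval T p x‖ * ‖y‖ + ‖x‖ * ‖aeval T (1 - p) y‖ := by
        rw [hsplit p]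
        exact (abs_add_le _ _).trans
          (add_le_add (abs_real_inner_le_norm _ _) (abs_real_inner_le_norm _ _))
    _ ≤ ε / (‖x‖ + ‖y‖ + 1) * (‖x‖ + ‖y‖) := by
        nlinarith [norm_nonneg x, norm_nonneg y]
    _ ≤ 0 + ε := by
        rw [zero_add, div_mul_eq_mul_div, div_le_iff₀ (by positivity)]
        nlinarith [norm_nonneg x, norm_nonneg y]

end Hilbert

/-- Proposition 1.6(b): if `μx`, `μy` are spectral measures of the bounded self-adjoint
operator `T` at `x` and at `y`, and `μx`, `μy` are mutually singular, then `⟪x, y⟫ = 0`. -/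
theorem stmt1 {H : Type*} [NormedAddCommGroup H] [InnerProductSpace ℝ H] [CompleteSpace H]
    (T : H →L[ℝ] H) (hT : IsSelfAdjoint T) (x y : H)
    (μx μy : Measure ℝ) [IsFiniteMeasure μx] [IsFiniteMeasure μy]
    (Rx : ℝ) (hμxsupp : μx (Set.Icc (-Rx) Rx)ᶜ = 0)
    (Ry : ℝ) (hμysupp : μy (Set.Icc (-Ry) Ry)ᶜ = 0)
    (hx : ∀ k : ℕ, ⟪(T ^ k) x, x⟫ = ∫ t, t ^ k ∂μx)
    (hy : ∀ k : ℕ, ⟪(T ^ k) y, y⟫ = ∫ t, t ^ k ∂μy)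
    (hsing : μx ⟂ₘ μy) :
    ⟪x, y⟫ = 0 := by
  have hK : IsCompact (Icc (-Rx) Rx ∪ Icc (-Ry) Ry) := isCompact_Icc.union isCompact_Icc
  have hxK : ∀ᵐ t ∂μx, t ∈ Icc (-Rx) Rx ∪ Icc (-Ry) Ry :=
    (show ∀ᵐ t ∂μx, t ∈ Icc (-Rx) Rx from mem_ae_iff.mpr hμxsupp).mono fun _ => Or.inl
  have hyK : ∀ᵐ t ∂μy, t ∈ Icc (-Rx) Rx ∪ Icc (-Ry) Ry :=
    (show ∀ᵐ t ∂μy, t ∈ Icc (-Ry) Ry from mem_ae_iff.mpr hμysupp).mono fun _ => Or.inr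
  refine inner_eq_zero_of_forall_exists_polynomial hT fun ε hε => ?_
  obtain ⟨p, hpx, hpy⟩ := hsing.exists_polynomial_integral_sq_le hK hxK hyK (pow_pos hε 2)
  refine ⟨p, ?_, ?_⟩
  · rw [← pow_le_pow_iff_left₀ (norm_nonneg _) hε.le two_ne_zero,
      norm_aeval_apply_sq hT hK hxK hx]
    exact hpx
  · rw [← pow_le_pow_iff_left₀ (norm_nonneg _) hε.le two_ne_zero,
      norm_aeval_apply_sq hT hK hyK hy]
    exact hpy
end

section
/- Let η be a finite measure on a measurable space and let f, g be nonnegative η-integrable functions. Set Δ₁ = ∫ |f − g| dη and s = ∫ (f + g) dη. Then ∫ (√f − √g)² dη ≥ s − √(s² − Δ₁²). -/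
open MeasureTheory

/-! Writing `u = √f - √g` and `v = √f + √g`, one has `|f - g| = |u| v` and `u² + v² = 2 (f + g)`.
Hence `A = ∫ u²` and `B = ∫ v²` satisfy `A + B = 2 s`, and Cauchy–Schwarz gives
`Δ₁² ≤ A B = A (2 s - A)`, i.e. `(s - A)² ≤ s² - Δ₁²`, so `s - A ≤ √(s² - Δ₁²)`. -/

namespace Real

theorem sq_sqrt_sub_sqrt_add_sq_sqrt_add_sqrt {x y : ℝ} (hx : 0 ≤ x) (hy : 0 ≤ y) :
    (√x - √y) ^ 2 + (√x + √y) ^ 2 = 2 * (x + y) := by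
  nlinarith [sq_sqrt hx, sq_sqrt hy]

theorem abs_sub_eq_abs_sqrt_sub_sqrt_mul {x y : ℝ} (hx : 0 ≤ x) (hy : 0 ≤ y) :
    |x - y| = |√x - √y| * (√x + √y) := by
  rw [← abs_of_nonneg (add_nonneg (sqrt_nonneg x) (sqrt_nonneg y)), ← abs_mul]
  congr 1
  nlinarith [sq_sqrt hx, sq_sqrt hy]

theorem sub_sqrt_sq_sub_sq_le {s Δ A : ℝ} (h : Δ ^ 2 ≤ A * (2 * s - A)) :
    s - √(s ^ 2 - Δ ^ 2) ≤ A := by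
  have : |s - A| ≤ √(s ^ 2 - Δ ^ 2) := abs_le_sqrt (by nlinarith)
  linarith [le_abs_self (s - A)]

end Real

section

variable {α : Type*} [MeasurableSpace α] {μ : Measure α}

theorem memLp_two_sqrt {f : α → ℝ} (hf : Integrable f μ) (hf0 : 0 ≤ᵐ[μ] f) :
    MemLp (fun a => √(f a)) 2 μ := by
  rw [memLp_two_iff_integrable_sq (Real.continuous_sqrt.comp_aestronglyMeasurable hf.1)]
  refine hf.congr ?_
  filter_upwards [hf0] with a ha
  exact (Real.sq_sqrt ha).symm

theorem sq_integral_mul_le_of_nonneg {u v : α → ℝ} (hu0 : 0 ≤ᵐ[μ] u) (hv0 : 0 ≤ᵐ[μ] v)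
    (hu : MemLp u 2 μ) (hv : MemLp v 2 μ) :
    (∫ a, u a * v a ∂μ) ^ 2 ≤ (∫ a, u a ^ 2 ∂μ) * ∫ a, v a ^ 2 ∂μ := by
  have holder := integral_mul_le_Lp_mul_Lq_of_nonneg Real.HolderConjugate.two_two hu0 hv0
    (by simpa using hu) (by simpa using hv)
  simp only [Real.rpow_two, ← Real.sqrt_eq_rpow] at holder
  have hint : 0 ≤ ∫ a, u a * v a ∂μ :=
    integral_nonneg_of_ae (by filter_upwards [hu0, hv0] with a hua hva using mul_nonneg hua hva)
  calc (∫ a, u a * v a ∂μ) ^ 2 ≤ (√(∫ a, u a ^ 2 ∂μ) * √(∫ a, v a ^ 2 ∂μ)) ^ 2 :=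
        pow_le_pow_left₀ hint holder 2
    _ = (∫ a, u a ^ 2 ∂μ) * ∫ a, v a ^ 2 ∂μ := by
        rw [mul_pow, Real.sq_sqrt (integral_nonneg fun a => sq_nonneg _),
          Real.sq_sqrt (integral_nonneg fun a => sq_nonneg _)]

end

theorem stmt7_general {α : Type*} [MeasurableSpace α] (η : Measure α)
    (f g : α → ℝ) (hf0 : ∀ a, 0 ≤ f a) (hg0 : ∀ a, 0 ≤ g a)
    (hf : Integrable f η) (hg : Integrable g η)
    (Δ₁ s : ℝ)
    (hΔ₁ : Δ₁ = ∫ a, |f a - g a| ∂η)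
    (hs : s = ∫ a, (f a + g a) ∂η) :
    ∫ a, (Real.sqrt (f a) - Real.sqrt (g a)) ^ 2 ∂η ≥ s - Real.sqrt (s ^ 2 - Δ₁ ^ 2) := by
  have hsf := memLp_two_sqrt hf (ae_of_all η hf0)
  have hsg := memLp_two_sqrt hg (ae_of_all η hg0)
  have hu : MemLp (fun a => √(f a) - √(g a)) 2 η := hsf.sub hsg
  have hv : MemLp (fun a => √(f a) + √(g a)) 2 η := hsf.add hsg
  have hAB : ∫ a, (√(f a) - √(g a)) ^ 2 ∂η + ∫ a, (√(f a) + √(g a)) ^ 2 ∂η = 2 * s := by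
    rw [← integral_add hu.integrable_sq hv.integrable_sq, hs,
      ← integral_const_mul]
    simp only [Real.sq_sqrt_sub_sqrt_add_sq_sqrt_add_sqrt (hf0 _) (hg0 _)]
  have hCS : Δ₁ ^ 2 ≤
      (∫ a, (√(f a) - √(g a)) ^ 2 ∂η) * ∫ a, (√(f a) + √(g a)) ^ 2 ∂η := by
    simpa only [hΔ₁, Real.abs_sub_eq_abs_sqrt_sub_sqrt_mul (hf0 _) (hg0 _), sq_abs] using
      sq_integral_mul_le_of_nonneg (ae_of_all η fun a => abs_nonneg _)
        (ae_of_all η fun a => add_nonneg (Real.sqrt_nonneg _) (Real.sqrt_nonneg _))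
        hu.abs hv
  exact Real.sub_sqrt_sq_sub_sq_le (by rwa [← hAB, add_sub_cancel_left])

/-- Lemma 3.3: for a finite measure `η` and nonnegative integrable functions `f`, `g`,
with `Δ₁ = ∫ |f - g| dη` and `s = ∫ (f + g) dη`, one has
`∫ (√f - √g)² dη ≥ s - √(s² - Δ₁²)`. -/
theorem stmt7 {α : Type*} [MeasurableSpace α] (η : Measure α) [IsFiniteMeasure η]
    (f g : α → ℝ) (hf0 : ∀ a, 0 ≤ f a) (hg0 : ∀ a, 0 ≤ g a)
    (hf : Integrable f η) (hg : Integrable g η)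
    (Δ₁ s : ℝ)
    (hΔ₁ : Δ₁ = ∫ a, |f a - g a| ∂η)
    (hs : s = ∫ a, (f a + g a) ∂η) :
    ∫ a, (Real.sqrt (f a) - Real.sqrt (g a)) ^ 2 ∂η ≥ s - Real.sqrt (s ^ 2 - Δ₁ ^ 2) :=
  stmt7_general η f g hf0 hg0 hf hg Δ₁ s hΔ₁ hs
end
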